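/- arXiv:2604.10472 — 2 statements merged into one kernel-verified Lean document; each statement's English description precedes it below -/
import Mathlib

section
/- The Lobachevsky function satisfies Λ(s) = (1/2)·Im(Li₂(e^{2is})) for all real s, where Λ(s) = -∫₀^s log|2 sin t| dt and Li₂ is the dilogarithm. -/
open Real Complex

/-- The Lobachevsky function `Λ(s) = -∫₀^s log|2 sin t| dt`. -/
noncomputable def Lob (s : ℝ) : ℝ := -∫ t in (0:ℝ)..s, Real.log |2 * Real.sin t|

/-- The dilogarithm `Li₂(w) = -∫₀^w log(1-u)/u du`, parametrized along the segment,
which gives the principal branch on the plane cut along `[1,∞)`. -/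
noncomputable def Li2 (w : ℂ) : ℂ := -∫ t in (0:ℝ)..1, Complex.log (1 - t * w) / t

open Real Complex MeasureTheory Set intervalIntegral
set_option linter.unusedVariables false

lemma integrableOn_const_sub_log {b C : ℝ} (hb : 0 < b) (hC : Real.log b ≤ C) :
    IntegrableOn (fun x => C - Real.log x) (Set.Ioc 0 b) := by
  have h := integrableOn_deriv_of_nonneg (a := 0) (b := b)
    (g := fun x => (C+1)*x - x*Real.log x) (g' := fun x => C - Real.log x)
    (((continuous_const.mul continuous_id).sub Real.continuous_mul_log).continuousOn)
    (fun x hx => by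
      have hx0 : x ≠ 0 := ne_of_gt hx.1
      have h1 : HasDerivAt (fun x : ℝ => x * Real.log x) (Real.log x + 1) x := by
        simpa [mul_inv_cancel₀ hx0] using (hasDerivAt_id x).fun_mul (Real.hasDerivAt_log hx0)
      have h2 : HasDerivAt (fun x : ℝ => (C+1)*x) (C+1) x := by
        simpa using (hasDerivAt_id x).const_mul (C+1)
      refine (h2.fun_sub h1).congr_deriv ?_; ring)
    (fun x hx => by
      have : Real.log x ≤ Real.log b := Real.log_le_log hx.1 hx.2.le
      show 0 ≤ C - Real.log x
      linarith)
  exact h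

noncomputable def lsin : ℝ → ℝ := fun t => Real.log |2 * Real.sin t|

lemma lsin_meas : Measurable lsin :=
  Real.measurable_log.comp ((measurable_const.mul Real.measurable_sin).abs)

lemma lsin_int_half : IntervalIntegrable lsin volume 0 (π/2) := by
  rw [intervalIntegrable_iff_integrableOn_Ioc_of_le (by positivity)]
  have hg : IntegrableOn (fun x => 2*Real.log 2 - Real.log x) (Set.Ioc 0 (π/2)) :=
    integrableOn_const_sub_log (by positivity)
      (by
        have h1 : Real.log (π/2) ≤ Real.log 2 :=
          Real.log_le_log (by positivity) (by nlinarith [Real.pi_le_four])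
        nlinarith [Real.log_nonneg (by norm_num : (1:ℝ) ≤ 2)])
  refine Integrable.mono hg (lsin_meas.aestronglyMeasurable) ?_
  filter_upwards [ae_restrict_mem measurableSet_Ioc] with t ht
  have ht0 : 0 < t := ht.1
  have ht2 : t ≤ π/2 := ht.2
  have hsinpos : 0 < Real.sin t := Real.sin_pos_of_pos_of_lt_pi ht0 (by nlinarith [Real.pi_pos])
  have hts : t ≤ 2 * Real.sin t := by
    have h := Real.mul_le_sin ht0.le ht2
    rw [div_mul_eq_mul_div, div_le_iff₀ Real.pi_pos] at h
    nlinarith [Real.pi_le_four]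
  have habs : |2 * Real.sin t| = 2 * Real.sin t := abs_of_pos (by linarith)
  have hlogt : Real.log t ≤ Real.log (π/2) := Real.log_le_log ht0 ht2
  have hlog2 : (0:ℝ) ≤ Real.log 2 := Real.log_nonneg (by norm_num)
  have hpi2 : Real.log (π/2) ≤ Real.log 2 :=
    Real.log_le_log (by positivity) (by nlinarith [Real.pi_le_four])
  have hub : Real.log |2 * Real.sin t| ≤ Real.log 2 := by
    rw [habs]
    exact Real.log_le_log (by linarith) (by nlinarith [Real.sin_le_one t])
  have hlb : Real.log t ≤ Real.log |2 * Real.sin t| := by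
    rw [habs]; exact Real.log_le_log ht0 hts
  have hgpos : 0 ≤ 2*Real.log 2 - Real.log t := by linarith
  rw [Real.norm_eq_abs, Real.norm_eq_abs, _root_.abs_of_nonneg hgpos, abs_le]
  unfold lsin
  constructor
  · linarith
  · linarith

lemma lsin_int_pi : IntervalIntegrable lsin volume 0 π := by
  refine lsin_int_half.trans ?_
  have h := lsin_int_half.comp_sub_left π
  have he : (fun x => lsin (π - x)) = lsin := by
    funext x; unfold lsin; rw [Real.sin_pi_sub]
  rw [he] at h
  have e1 : π - 0 = π := by ring
  have e2 : π - π/2 = π/2 := by ring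
  rw [e1, e2] at h
  exact h.symm

lemma lsin_per : Function.Periodic lsin π := by
  intro x; unfold lsin
  rw [Real.sin_add_pi]
  congr 1
  rw [mul_neg, abs_neg]

lemma lsin_int_shift (k : ℤ) : IntervalIntegrable lsin volume (k*π) (k*π + π) := by
  have h := lsin_int_pi.comp_add_right (-(k*π))
  have he : (fun x => lsin (x + -(k*π))) = lsin := by
    funext x
    have := lsin_per.sub_int_mul_eq (x := x) k
    rw [← sub_eq_add_neg]
    exact this
  rw [he] at h
  convert h using 1 <;> ring

lemma lsin_int_nat (n : ℕ) : IntervalIntegrable lsin volume (-(n*π)) (n*π) := by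
  induction n with
  | zero => simp
  | succ n ih =>
    have h1 := lsin_int_shift (-(n+1))
    have h2 := lsin_int_shift n
    have h1' : IntervalIntegrable lsin volume (-((n+1:ℕ)*π)) (-(n*π)) := by
      convert h1 using 1 <;> push_cast <;> ring
    have h2' : IntervalIntegrable lsin volume (n*π) ((n+1:ℕ)*π) := by
      convert h2 using 1 <;> push_cast <;> ring
    exact (h1'.trans ih).trans h2'

lemma lsin_int (a b : ℝ) : IntervalIntegrable lsin volume a b := by
  obtain ⟨n, hn⟩ := exists_nat_ge ((max |a| |b|)/π)
  have hpi := Real.pi_pos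
  have hn' : max |a| |b| ≤ n*π := by
    rw [div_le_iff₀ hpi] at hn; linarith
  refine (lsin_int_nat n).mono_set (Set.uIcc_subset_uIcc ?_ ?_) <;>
    rw [Set.uIcc_of_le (by nlinarith [abs_nonneg a, abs_nonneg b] : -((n:ℝ)*π) ≤ (n:ℝ)*π)] <;>
    constructor <;>
    nlinarith [neg_abs_le a, le_abs_self a, neg_abs_le b, le_abs_self b,
      le_max_left |a| |b|, le_max_right |a| |b|]

lemma lob_cont : Continuous Lob := (intervalIntegral.continuous_primitive lsin_int 0).neg

lemma lob_deriv {s : ℝ} (hs : Real.sin s ≠ 0) :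
    HasDerivAt Lob (-(Real.log |2 * Real.sin s|)) s := by
  have hcont : ContinuousAt lsin s := by
    have h2 : (2:ℝ) * Real.sin s ≠ 0 := by simpa using hs
    exact ContinuousAt.log ((continuous_const.mul Real.continuous_sin).abs.continuousAt)
      (by simpa using h2)
  have := intervalIntegral.integral_hasDerivAt_right (lsin_int 0 s)
    (lsin_meas.stronglyMeasurable.stronglyMeasurableAtFilter) hcont
  exact this.neg

-- lower bound |1 - t w| ≥ |1 - w|/2 for |w| = 1, t ∈ [0,1]
lemma abs_one_sub_mul_ge {w : ℂ} (hw : ‖w‖ = 1) {t : ℝ} (h0 : 0 ≤ t) (h1 : t ≤ 1) :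
    ‖(1 - w)‖ / 2 ≤ ‖(1 - t * w)‖ := by
  have hns : w.re * w.re + w.im * w.im = 1 := by
    have : Complex.normSq w = 1 := by rw [← Complex.sq_norm, hw]; norm_num
    simpa [Complex.normSq_apply] using this
  have habs := Complex.abs_re_le_norm w
  rw [hw] at habs
  obtain ⟨hre1, hre2⟩ := abs_le.mp habs
  rw [div_le_iff₀ (by norm_num : (0:ℝ) < 2)]
  have h2 : (‖(1 - w)‖)^2 ≤ (‖(1 - t*w)‖ * 2)^2 := by
    rw [mul_pow, Complex.sq_norm, Complex.sq_norm]
    simp only [Complex.normSq_apply, Complex.sub_re, Complex.sub_im, Complex.one_re,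
      Complex.one_im, Complex.re_ofReal_mul, Complex.im_ofReal_mul]
    rcases le_or_gt 0 w.re with hc | hc
    · nlinarith [sq_nonneg (t - w.re), mul_nonneg (sub_nonneg.2 hre2) hc]
    · nlinarith [mul_nonneg h0 (neg_nonneg.2 hc.le), sq_nonneg t]
  nlinarith [h2, norm_nonneg (1-w), norm_nonneg (1 - (t:ℂ)*w)]

-- the bound function for the Li2 integrand
noncomputable def Bnd : ℝ → ℝ := fun t => 2*(Real.log 2 + π + 1) - 2*Real.log (1-t)

lemma bnd_int : IntervalIntegrable Bnd volume 0 1 := by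
  have h0 : IntervalIntegrable (fun x : ℝ => (0:ℝ) - Real.log x) volume 0 1 := by
    rw [intervalIntegrable_iff_integrableOn_Ioc_of_le zero_le_one]
    exact integrableOn_const_sub_log one_pos (by simp)
  have h2 := h0.comp_sub_left 1
  have h3 : IntervalIntegrable (fun x : ℝ => (0:ℝ) - Real.log (1-x)) volume 0 1 := by
    have e1 : (1:ℝ) - 1 = 0 := by norm_num
    have e2 : (1:ℝ) - 0 = 1 := by norm_num
    rw [e1, e2] at h2
    exact h2.symm
  have h5 := (h3.const_mul 2).add (_root_.intervalIntegrable_const (c := 2*(Real.log 2 + π + 1)))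
  have he : Bnd = fun t => 2*((0:ℝ) - Real.log (1-t)) + 2*(Real.log 2 + π + 1) := by
    funext t; unfold Bnd; ring
  rw [he]
  exact h5

lemma integrand_meas (w : ℂ) :
    AEStronglyMeasurable (fun t : ℝ => Complex.log (1 - t * w) / t)
      (volume.restrict (Set.uIoc (0:ℝ) 1)) := by
  refine Measurable.aestronglyMeasurable ?_
  exact (Complex.measurable_log.comp
    (measurable_const.sub (Complex.measurable_ofReal.mul_const w))).div
    Complex.measurable_ofReal

lemma norm_integrand_le {w : ℂ} (hw : ‖w‖ ≤ 1) {t : ℝ}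
    (ht : t ∈ Set.Ioo (0:ℝ) 1) : ‖Complex.log (1 - t * w) / t‖ ≤ Bnd t := by
  obtain ⟨ht0, ht1⟩ := ht
  have htw : ‖((t:ℂ) * w)‖ ≤ t := by
    rw [norm_mul, Complex.norm_real, Real.norm_eq_abs, abs_of_pos ht0]
    nlinarith [norm_nonneg w]
  have hlow : 1 - t ≤ ‖(1 - t*w)‖ := by
    calc 1 - t ≤ 1 - ‖((t:ℂ)*w)‖ := by linarith
    _ ≤ |1 - ‖((t:ℂ)*w)‖| := le_abs_self _
    _ ≤ ‖(1 - t*w)‖ := by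
        simpa using abs_norm_sub_norm_le 1 ((t:ℂ)*w)
  have hnorm : ‖Complex.log (1 - t*w) / t‖ = ‖(Complex.log (1 - t*w))‖ / t := by
    rw [norm_div, Complex.norm_real, Real.norm_eq_abs, abs_of_pos ht0]
  rw [hnorm]
  have hlog1mt : Real.log (1-t) ≤ 0 :=
    Real.log_nonpos (by linarith) (by linarith)
  rcases le_or_gt t (1/2) with hhalf | hhalf
  · -- small t : use norm_log_one_add_half_le_self
    have hz : ‖-((t:ℂ)*w)‖ ≤ 1/2 := by
      rw [norm_neg]; linarith
    have h := Complex.norm_log_one_add_half_le_self hz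
    have he : (1:ℂ) + -((t:ℂ)*w) = 1 - t*w := by ring
    rw [he, norm_neg] at h
    have : ‖(Complex.log (1 - t*w))‖ / t ≤ 3/2 := by
      rw [div_le_iff₀ ht0] at *
      calc ‖(Complex.log (1 - ↑t*w))‖ ≤ 3/2 * ‖((t:ℂ)*w)‖ := h
      _ ≤ 3/2 * t := by linarith
    unfold Bnd
    nlinarith [Real.log_nonneg (by norm_num : (1:ℝ) ≤ 2), Real.pi_pos]
  · -- large t : use re/im decomposition of log
    have habs2 : ‖(1 - t*w)‖ ≤ 2 := by
      calc ‖(1 - t*w)‖ ≤ ‖(1:ℂ)‖ + ‖((t:ℂ)*w)‖ := by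
            simpa [sub_eq_add_neg] using norm_add_le 1 (-((t:ℂ)*w))
      _ ≤ 1 + t := by rw [norm_one]; linarith
      _ ≤ 2 := by linarith
    have hlogabs : |Real.log (‖(1 - t*w)‖)| ≤ -Real.log (1-t) + Real.log 2 := by
      rcases le_or_gt 1 (‖(1 - t*w)‖) with hc | hc
      · rw [_root_.abs_of_nonneg (Real.log_nonneg hc)]
        have := Real.log_le_log (by linarith) habs2
        linarith
      · rw [_root_.abs_of_nonpos (Real.log_nonpos (norm_nonneg _) hc.le)]
        have h1mt : (0:ℝ) < 1 - t := by linarith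
        have := Real.log_le_log h1mt hlow
        nlinarith [Real.log_nonneg (by norm_num : (1:ℝ) ≤ 2)]
    have hlogbound : ‖(Complex.log (1 - t*w))‖ ≤ -Real.log (1-t) + Real.log 2 + π := by
      calc ‖(Complex.log (1 - t*w))‖
          ≤ |(Complex.log (1 - t*w)).re| + |(Complex.log (1 - t*w)).im| :=
            Complex.norm_le_abs_re_add_abs_im _
      _ ≤ (-Real.log (1-t) + Real.log 2) + π := by
            rw [Complex.log_re, Complex.log_im]
            exact add_le_add hlogabs (Complex.abs_arg_le_pi _)
      _ = -Real.log (1-t) + Real.log 2 + π := by ring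
    have ht' : 1/2 ≤ t := hhalf.le
    rw [div_le_iff₀ ht0]
    unfold Bnd
    nlinarith [Real.log_nonneg (by norm_num : (1:ℝ) ≤ 2), Real.pi_pos, hlogbound,
      norm_nonneg (Complex.log (1 - ↑t*w))]

lemma integrand_int {w : ℂ} (hw : ‖w‖ ≤ 1) :
    IntervalIntegrable (fun t : ℝ => Complex.log (1 - t * w) / t) volume 0 1 := by
  rw [intervalIntegrable_iff_integrableOn_Ioc_of_le zero_le_one]
  have hbnd : IntegrableOn Bnd (Set.Ioc (0:ℝ) 1) := by
    have := bnd_int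
    rwa [intervalIntegrable_iff_integrableOn_Ioc_of_le zero_le_one] at this
  refine Integrable.mono hbnd ?_ ?_
  · have := integrand_meas w
    rwa [Set.uIoc_of_le zero_le_one] at this
  · have hne : ∀ᵐ t : ℝ ∂(volume.restrict (Set.Ioc (0:ℝ) 1)), t ≠ 1 := by
      refine ae_restrict_of_ae ?_
      rw [MeasureTheory.ae_iff]
      convert Real.volume_singleton (a := 1) using 2
      ext x; simp
    filter_upwards [ae_restrict_mem measurableSet_Ioc, hne] with t ht htne
    have htIoo : t ∈ Set.Ioo (0:ℝ) 1 := ⟨ht.1, lt_of_le_of_ne ht.2 htne⟩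
    have h := norm_integrand_le hw htIoo
    have hBnonneg : 0 ≤ Bnd t := le_trans (norm_nonneg _) h
    rw [Real.norm_eq_abs, _root_.abs_of_nonneg hBnonneg]
    exact h

lemma ae_ne_one : ∀ᵐ t : ℝ, t ≠ 1 := by
  rw [MeasureTheory.ae_iff]
  convert Real.volume_singleton (a := 1) using 2
  ext x; simp

lemma habs_exp (s : ℝ) : ‖(Complex.exp (2*Complex.I*s))‖ = 1 := by
  rw [Complex.norm_exp]
  simp [Complex.mul_re, Complex.mul_im]

lemma exp_re_le (s : ℝ) {t : ℝ} (h0 : 0 ≤ t) :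
    ((t:ℂ) * Complex.exp (2*Complex.I*s)).re ≤ t := by
  rw [Complex.re_ofReal_mul]
  have h1 := Complex.re_le_norm (Complex.exp (2*Complex.I*(s:ℂ)))
  rw [habs_exp s] at h1
  nlinarith

lemma integrand_contAt (s₀ : ℝ) {t : ℝ} (ht : t ∈ Set.Ioo (0:ℝ) 1) :
    ContinuousAt (fun s : ℝ => Complex.log (1 - t * Complex.exp (2*Complex.I*s)) / t) s₀ := by
  have hinner : Continuous fun s : ℝ => 1 - (t:ℂ) * Complex.exp (2*Complex.I*s) :=
    continuous_const.sub (continuous_const.mul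
      (Complex.continuous_exp.comp (continuous_const.mul Complex.continuous_ofReal)))
  have hre : 0 < (1 - (t:ℂ) * Complex.exp (2*Complex.I*s₀)).re := by
    have := exp_re_le s₀ ht.1.le
    simp only [Complex.sub_re, Complex.one_re]
    linarith [ht.2]
  have hlog : ContinuousAt Complex.log (1 - (t:ℂ) * Complex.exp (2*Complex.I*s₀)) :=
    continuousAt_clog (Complex.mem_slitPlane_iff.mpr (Or.inl hre))
  have h2 : ContinuousAt (fun s : ℝ => Complex.log (1 - t * Complex.exp (2*Complex.I*s))) s₀ :=
    ContinuousAt.comp (f := fun s : ℝ => 1 - (t:ℂ) * Complex.exp (2*Complex.I*s)) hlog hinner.continuousAt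
  exact h2.div_const _

lemma li2_cont : Continuous (fun s : ℝ => Li2 (Complex.exp (2*Complex.I*s))) := by
  rw [continuous_iff_continuousAt]
  intro s₀
  unfold Li2
  apply ContinuousAt.neg
  unfold ContinuousAt
  refine intervalIntegral.tendsto_integral_filter_of_dominated_convergence Bnd ?_ ?_ bnd_int ?_
  · filter_upwards with s
    exact integrand_meas _
  · filter_upwards with s
    filter_upwards [ae_ne_one] with t htne ht
    rw [Set.uIoc_of_le zero_le_one] at ht
    exact norm_integrand_le (le_of_eq (habs_exp s)) ⟨ht.1, lt_of_le_of_ne ht.2 htne⟩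
  · filter_upwards [ae_ne_one] with t htne ht
    rw [Set.uIoc_of_le zero_le_one] at ht
    exact (integrand_contAt s₀ ⟨ht.1, lt_of_le_of_ne ht.2 htne⟩).tendsto

lemma one_sub_exp_eq (s : ℝ) :
    1 - Complex.exp (2*Complex.I*s) = -Complex.exp (Complex.I*s) * (2*Complex.I*Complex.sin s) := by
  rw [Complex.sin]
  have h : (2:ℂ)*Complex.I*s = Complex.I*s + Complex.I*s := by ring
  rw [h, Complex.exp_add]
  have h2 : -(s:ℂ)*Complex.I = -(Complex.I*s) := by ring
  have h3 : (s:ℂ)*Complex.I = Complex.I*s := by ring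
  rw [h2, h3, Complex.exp_neg]
  have hne : Complex.exp (Complex.I*s) ≠ 0 := Complex.exp_ne_zero _
  field_simp
  ring_nf
  rw [Complex.I_sq]
  ring

lemma abs_one_sub_exp (s : ℝ) :
    ‖(1 - Complex.exp (2*Complex.I*s))‖ = |2 * Real.sin s| := by
  rw [one_sub_exp_eq]
  rw [norm_mul, norm_neg, Complex.norm_exp]
  have h1 : (Complex.I*(s:ℂ)).re = 0 := by simp
  rw [h1, Real.exp_zero, one_mul]
  have h2 : (2:ℂ)*Complex.I*Complex.sin s = ((2 * Real.sin s : ℝ) : ℂ) * Complex.I := by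
    rw [← Complex.ofReal_sin]
    push_cast
    ring
  rw [h2, norm_mul, Complex.norm_I, mul_one, Complex.norm_real, Real.norm_eq_abs]

lemma exp_ne_one {s : ℝ} (hs : Real.sin s ≠ 0) : Complex.exp (2*Complex.I*s) ≠ 1 := by
  intro h
  apply hs
  have h2 : ‖(1 - Complex.exp (2*Complex.I*s))‖ = 0 := by rw [h]; simp
  rw [abs_one_sub_exp] at h2
  have := abs_eq_zero.mp h2
  linarith [mul_eq_zero.mp this |>.resolve_left (by norm_num : (2:ℝ) ≠ 0)]

lemma re_lt_one {w : ℂ} (hw : ‖w‖ = 1) (hw1 : w ≠ 1) : w.re < 1 := by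
  have hre := Complex.re_le_norm w
  rw [hw] at hre
  rcases lt_or_eq_of_le hre with h | h
  · exact h
  · exfalso
    apply hw1
    have hns : w.re * w.re + w.im * w.im = 1 := by
      have : Complex.normSq w = 1 := by rw [← Complex.sq_norm, hw]; norm_num
      simpa [Complex.normSq_apply] using this
    have him : w.im = 0 := by nlinarith
    exact Complex.ext (by rw [h]; rfl) (by rw [him]; rfl)

-- derivative in s of the integrand, for fixed t ≠ 0, t ∈ [0,1)
lemma integrand_hasDerivAt {t x : ℝ} (ht0 : 0 < t) (ht1 : t < 1) :
    HasDerivAt (fun s : ℝ => Complex.log (1 - t * Complex.exp (2*Complex.I*s)) / t)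
      (-(2*Complex.I*Complex.exp (2*Complex.I*x)) / (1 - t * Complex.exp (2*Complex.I*x))) x := by
  have hexp : HasDerivAt (fun s : ℝ => Complex.exp (2*Complex.I*s))
      (2*Complex.I*Complex.exp (2*Complex.I*x)) x := by
    have h1 : HasDerivAt (fun s : ℝ => ((s:ℝ):ℂ)) 1 x := by
      simpa using (hasDerivAt_id x).ofReal_comp
    have h2 : HasDerivAt (fun s : ℝ => 2*Complex.I*(s:ℂ)) (2*Complex.I) x := by
      simpa using h1.const_mul (2*Complex.I)
    simpa [mul_comm] using h2.cexp
  have hinner : HasDerivAt (fun s : ℝ => 1 - (t:ℂ) * Complex.exp (2*Complex.I*s))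
      (-((t:ℂ) * (2*Complex.I*Complex.exp (2*Complex.I*x)))) x := by
    simpa using (hexp.const_mul (t:ℂ)).const_sub 1
  have hre : 0 < (1 - (t:ℂ) * Complex.exp (2*Complex.I*x)).re := by
    have := exp_re_le x ht0.le
    simp only [Complex.sub_re, Complex.one_re]
    linarith
  have hlog := hinner.clog_real (Or.inl hre)
  have h := hlog.div_const (t:ℂ)
  refine h.congr_deriv ?_
  have htne : (t:ℂ) ≠ 0 := by exact_mod_cast ht0.ne'
  have hden : (1 - (t:ℂ) * Complex.exp (2*Complex.I*x)) ≠ 0 := by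
    intro hz
    rw [hz] at hre
    simp at hre
  field_simp

lemma denom_re_pos {w : ℂ} (hw : ‖w‖ = 1) (hw1 : w ≠ 1) {t : ℝ}
    (ht0 : 0 ≤ t) (ht1 : t ≤ 1) : 0 < (1 - (t:ℂ) * w).re := by
  have h1 : w.re < 1 := re_lt_one hw hw1
  simp only [Complex.sub_re, Complex.one_re, Complex.re_ofReal_mul]
  rcases eq_or_lt_of_le ht1 with rfl | h
  · linarith
  · have : t * w.re ≤ t := by nlinarith
    linarith

lemma integral_deriv {w : ℂ} (hw : ‖w‖ = 1) (hw1 : w ≠ 1) :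
    ∫ t in (0:ℝ)..1, -(2*Complex.I*w) / (1 - t*w) = 2*Complex.I*Complex.log (1-w) := by
  have hne : ∀ t : ℝ, t ∈ Set.uIcc (0:ℝ) 1 → (1 - (t:ℂ)*w) ≠ 0 := by
    intro t ht
    rw [Set.uIcc_of_le zero_le_one] at ht
    intro hz
    have := denom_re_pos hw hw1 ht.1 ht.2
    rw [hz] at this
    simp at this
  have hd : ∀ t ∈ Set.uIcc (0:ℝ) 1,
      HasDerivAt (fun t : ℝ => 2*Complex.I*Complex.log (1 - t*w)) (-(2*Complex.I*w) / (1 - t*w)) t := by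
    intro t ht
    rw [Set.uIcc_of_le zero_le_one] at ht
    have hinner : HasDerivAt (fun t : ℝ => 1 - (t:ℂ)*w) (-w) t := by
      have h1 : HasDerivAt (fun s : ℝ => ((s:ℝ):ℂ)) 1 t := by
        simpa using (hasDerivAt_id t).ofReal_comp
      simpa using (h1.mul_const w).const_sub 1
    have hlog := hinner.clog_real (Or.inl (denom_re_pos hw hw1 ht.1 ht.2))
    have h := hlog.const_mul (2*Complex.I)
    refine h.congr_deriv ?_
    have := hne t (by rw [Set.uIcc_of_le zero_le_one]; exact ht)
    field_simp
  have hcont : ContinuousOn (fun t : ℝ => -(2*Complex.I*w) / (1 - t*w)) (Set.uIcc (0:ℝ) 1) := by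
    refine ContinuousOn.div continuousOn_const ?_ hne
    exact (continuous_const.sub (Complex.continuous_ofReal.mul continuous_const)).continuousOn
  have := intervalIntegral.integral_eq_sub_of_hasDerivAt hd
    (hcont.intervalIntegrable)
  rw [this]
  simp [Complex.ofReal_one, Complex.ofReal_zero, Complex.log_one]

lemma li2_hasDerivAt {s₀ : ℝ} (hs : Real.sin s₀ ≠ 0) :
    HasDerivAt (fun s : ℝ => Li2 (Complex.exp (2*Complex.I*s)))
      (-(2*Complex.I*Complex.log (1 - Complex.exp (2*Complex.I*s₀)))) s₀ := by
  set w := Complex.exp (2*Complex.I*s₀) with hw_def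
  have hw : ‖w‖ = 1 := habs_exp s₀
  have hw1 : w ≠ 1 := exp_ne_one hs
  have hrpos : 0 < ‖(1 - w)‖ :=
    norm_pos_iff.mpr (sub_ne_zero_of_ne (Ne.symm hw1))
  set r := ‖(1 - w)‖ / 2 with hr_def
  have hrpos' : 0 < r := by positivity
  have hcontabs : Continuous fun x : ℝ => ‖(1 - Complex.exp (2*Complex.I*x))‖ :=
    continuous_norm.comp (continuous_const.sub
      (Complex.continuous_exp.comp (continuous_const.mul Complex.continuous_ofReal)))
  have hev : ∀ᶠ x : ℝ in nhds s₀, r < ‖(1 - Complex.exp (2*Complex.I*(x:ℂ)))‖ :=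
    hcontabs.continuousAt.eventually (eventually_gt_nhds (by rw [hr_def]; linarith))
  obtain ⟨ε, hε, hball⟩ := Metric.eventually_nhds_iff_ball.mp hev
  have key := intervalIntegral.hasDerivAt_integral_of_dominated_loc_of_deriv_le (μ := volume)
    (𝕜 := ℝ)
    (F := fun (x : ℝ) (t : ℝ) => Complex.log (1 - t * Complex.exp (2*Complex.I*(x:ℂ))) / t)
    (F' := fun (x : ℝ) (t : ℝ) => -(2*Complex.I*Complex.exp (2*Complex.I*(x:ℂ))) / (1 - t * Complex.exp (2*Complex.I*(x:ℂ))))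
    (x₀ := s₀) (a := 0) (b := 1) (bound := fun _ => 4/r) (Metric.ball_mem_nhds s₀ hε)
    ?_ ?_ ?_ ?_ ?_ ?_
  · have hI := key.2
    have he : ∀ s : ℝ, Li2 (Complex.exp (2*Complex.I*s)) =
        -∫ t in (0:ℝ)..1, Complex.log (1 - t * Complex.exp (2*Complex.I*s)) / t := fun s => rfl
    have := hI.fun_neg
    simp only [← he] at this
    have hint : (∫ t in (0:ℝ)..1, -(2*Complex.I*w) / (1 - t*w)) = 2*Complex.I*Complex.log (1-w) :=
      integral_deriv hw hw1
    rw [hint] at this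
    simpa using this
  · filter_upwards with x
    exact integrand_meas _
  · exact integrand_int (le_of_eq hw)
  · refine Measurable.aestronglyMeasurable ?_
    exact measurable_const.div (measurable_const.sub (Complex.measurable_ofReal.mul_const w))
  · filter_upwards with t
    intro ht x hx
    rw [Set.uIoc_of_le zero_le_one] at ht
    have hlow : r/2 ≤ ‖(1 - t * Complex.exp (2*Complex.I*x))‖ := by
      have h1 := abs_one_sub_mul_ge (habs_exp x) ht.1.le ht.2
      calc r/2 ≤ ‖(1 - Complex.exp (2*Complex.I*x))‖ / 2 := by
            have h2 := hball x hx; linarith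
      _ ≤ ‖(1 - t * Complex.exp (2*Complex.I*x))‖ := h1
    have hnorm : ‖-(2*Complex.I*Complex.exp (2*Complex.I*x)) / (1 - t * Complex.exp (2*Complex.I*x))‖
        = 2 / ‖(1 - t * Complex.exp (2*Complex.I*x))‖ := by
      rw [norm_div, norm_neg]
      congr 1
      rw [norm_mul, norm_mul, Complex.norm_I, Complex.norm_two, habs_exp x]
      ring
    rw [hnorm]
    calc 2 / ‖(1 - t * Complex.exp (2*Complex.I*x))‖ ≤ 2 / (r/2) :=
          div_le_div_of_nonneg_left (by norm_num) (by positivity) hlow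
    _ = 4/r := by rw [div_div_eq_mul_div]; norm_num
  · exact intervalIntegrable_const
  · filter_upwards [ae_ne_one] with t htne
    intro ht x _
    rw [Set.uIoc_of_le zero_le_one] at ht
    exact integrand_hasDerivAt ht.1 (lt_of_le_of_ne ht.2 htne)

noncomputable def Phi : ℝ → ℝ :=
  fun s => Lob s - (1/2) * (Li2 (Complex.exp (2*Complex.I*s))).im

lemma phi_cont : Continuous Phi :=
  lob_cont.sub (continuous_const.mul (Complex.continuous_im.comp li2_cont))

lemma phi_deriv {s : ℝ} (hs : Real.sin s ≠ 0) : HasDerivAt Phi 0 s := by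
  have h1 := lob_deriv hs
  have h2 := li2_hasDerivAt hs
  have h3 : HasDerivAt (fun s : ℝ => (Li2 (Complex.exp (2*Complex.I*s))).im)
      ((-(2*Complex.I*Complex.log (1 - Complex.exp (2*Complex.I*(s:ℂ))))).im) s :=
    Complex.imCLM.hasFDerivAt.comp_hasDerivAt s h2
  have him : (-(2*Complex.I*Complex.log (1 - Complex.exp (2*Complex.I*(s:ℂ))))).im
      = -(2 * Real.log |2 * Real.sin s|) := by
    have e : (-(2*Complex.I*Complex.log (1 - Complex.exp (2*Complex.I*(s:ℂ))))).im
        = -(2*(Complex.log (1 - Complex.exp (2*Complex.I*(s:ℂ)))).re) := by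
      simp [Complex.mul_im]
    rw [e, Complex.log_re, abs_one_sub_exp]
  rw [him] at h3
  have h4 := h1.sub (h3.const_mul (1/2))
  refine h4.congr_deriv ?_
  ring

lemma phi_zero : Phi 0 = 0 := by
  unfold Phi Lob
  rw [intervalIntegral.integral_same]
  have he : Complex.exp (2*Complex.I*((0:ℝ):ℂ)) = 1 := by
    simp
  rw [he]
  have hIm : (Li2 1).im = 0 := by
    unfold Li2
    have hcongr : (∫ t in (0:ℝ)..1, Complex.log (1 - (t:ℂ)*1)/(t:ℂ))
        = ((∫ t in (0:ℝ)..1, Real.log (1-t)/t : ℝ) : ℂ) := by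
      rw [← intervalIntegral.integral_ofReal]
      apply intervalIntegral.integral_congr
      intro t ht
      rw [Set.uIcc_of_le zero_le_one] at ht
      have h1 : ((Real.log (1-t) : ℝ) : ℂ) = Complex.log (1 - (t:ℂ)*1) := by
        rw [mul_one]
        have h2 : (1 - (t:ℂ)) = ((1 - t : ℝ) : ℂ) := by push_cast; ring
        rw [h2, Complex.ofReal_log (by linarith [ht.2])]
      show Complex.log (1 - (t:ℂ)*1)/(t:ℂ) = ((Real.log (1-t)/t : ℝ):ℂ)
      rw [Complex.ofReal_div, h1]
    rw [hcongr]
    simp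
  rw [hIm]
  ring

lemma phi_step {a b : ℝ} (hab : a ≤ b) (hno : ∀ x ∈ Set.Ioo a b, Real.sin x ≠ 0) :
    Phi a = Phi b := by
  rcases eq_or_lt_of_le hab with rfl | hlt
  · rfl
  · obtain ⟨c, hc, hceq⟩ := exists_hasDerivAt_eq_slope Phi (fun _ => 0) hlt
      phi_cont.continuousOn (fun x hx => phi_deriv (hno x hx))
    have hba : b - a ≠ 0 := ne_of_gt (sub_pos.mpr hlt)
    have h0 : (Phi b - Phi a)/(b-a) = 0 := hceq.symm
    have := (div_eq_zero_iff.mp h0).resolve_right hba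
    linarith

lemma no_sin_zero {k : ℤ} {x : ℝ} (hx : x ∈ Set.Ioo ((k:ℝ)*π) ((k+1:ℝ)*π)) :
    Real.sin x ≠ 0 := by
  intro h
  obtain ⟨n, hn⟩ := Real.sin_eq_zero_iff.mp h
  obtain ⟨h1, h2⟩ := hx
  rw [← hn] at h1 h2
  have hpi := Real.pi_pos
  have hk1 : (k:ℝ) < n := by
    by_contra hcon
    push_neg at hcon
    nlinarith
  have hk2 : (n:ℝ) < (k:ℝ)+1 := by
    by_contra hcon
    push_neg at hcon
    nlinarith
  have : k < n := by exact_mod_cast hk1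
  have : n < k + 1 := by exact_mod_cast hk2
  omega

lemma phi_mul_pi (k : ℤ) : Phi ((k:ℝ)*π) = Phi 0 := by
  have hstep : ∀ m : ℤ, Phi ((m:ℝ)*π) = Phi (((m+1:ℤ):ℝ)*π) := by
    intro m
    apply phi_step
    · push_cast
      nlinarith [Real.pi_pos]
    · intro x hx
      refine no_sin_zero (k := m) ?_
      push_cast at hx ⊢
      exact hx
  induction k using Int.induction_on with
  | zero => simp
  | succ n ih =>
    have h := hstep n
    push_cast at h ⊢
    rw [← h]
    exact_mod_cast ih
  | pred n ih =>
    have h := hstep (-(n:ℤ)-1)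
    have e : ((-(n:ℤ)-1) + 1 : ℤ) = -(n:ℤ) := by ring
    rw [e] at h
    rw [h]
    exact ih

theorem lob_eq_half_im_li2 (s : ℝ) :
    Lob s = (1 / 2) * (Li2 (Complex.exp (2 * Complex.I * s))).im := by
  have hpi := Real.pi_pos
  have key : Phi s = 0 := by
    set k : ℤ := ⌊s/π⌋ with hk
    have h1 : (k:ℝ)*π ≤ s := by
      rw [hk]
      have := Int.floor_le (s/π)
      calc (⌊s/π⌋:ℝ)*π ≤ (s/π)*π := by nlinarith
      _ = s := by field_simp
    have h2 : s ≤ ((k+1:ℤ):ℝ)*π := by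
      have := (Int.lt_floor_add_one (s/π)).le
      push_cast
      calc s = (s/π)*π := by field_simp
      _ ≤ ((⌊s/π⌋:ℝ)+1)*π := by nlinarith
    have hno : ∀ x ∈ Set.Ioo ((k:ℝ)*π) s, Real.sin x ≠ 0 := by
      intro x hx
      refine no_sin_zero (k := k) ⟨hx.1, ?_⟩
      push_cast
      calc x < s := hx.2
      _ ≤ ((k:ℝ)+1)*π := by push_cast at h2; linarith
    rw [← phi_step h1 hno, phi_mul_pi k, phi_zero]
  unfold Phi at key
  linarith
end

section
/- For α ∈ [0, 2π/3), the quantity 2(Λ(θ_E + α/2) + Λ(θ_E - α/2)) with θ_E = (1/2)arccos(cos α - 1/2) is positive, and at α = 0 it equals 6Λ(π/3) (the volume of the figure-eight knot complement). -/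
open Real MeasureTheory Set intervalIntegral

namespace LobAux


noncomputable def f (t : ℝ) : ℝ := Real.log |2 * Real.sin t|

lemma meas_f : Measurable f :=
  Real.measurable_log.comp ((measurable_const.mul Real.measurable_sin).abs)

lemma ii_log01 : IntervalIntegrable Real.log volume 0 1 := by
  have h : IntegrableOn (fun x => -Real.log x) (Ioc (0:ℝ) 1) := by
    apply integrableOn_deriv_of_nonneg (g := fun x => x - x * Real.log x)
    · exact (continuous_id.sub Real.continuous_mul_log).continuousOn
    · intro x hx
      have h1 : HasDerivAt (fun x : ℝ => x - x * Real.log x) (1 - (Real.log x + 1)) x :=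
        (hasDerivAt_id x).sub (Real.hasDerivAt_mul_log (ne_of_gt hx.1))
      have : (1:ℝ) - (Real.log x + 1) = -Real.log x := by ring
      rwa [this] at h1
    · intro x hx
      have : Real.log x ≤ 0 := Real.log_nonpos (le_of_lt hx.1) (le_of_lt hx.2)
      linarith
  have h2 : IntegrableOn Real.log (Ioc (0:ℝ) 1) := by
    have h3 := h.neg
    have h4 : (-fun x => -Real.log x) = Real.log := by funext x; simp
    rwa [h4] at h3
  rw [intervalIntegrable_iff_integrableOn_Ioo_of_le (by norm_num)]
  exact h2.mono_set Ioo_subset_Ioc_self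

lemma ii_log : IntervalIntegrable Real.log volume 0 (π/2) := by
  have h2 : IntervalIntegrable Real.log volume 1 2 :=
    intervalIntegrable_log (by rw [uIcc_of_le (by norm_num)]; rintro ⟨h, -⟩; norm_num at h)
  have := ii_log01.trans h2
  apply this.mono_set
  rw [uIcc_of_le (by positivity), uIcc_of_le (by norm_num)]
  exact Icc_subset_Icc le_rfl (by nlinarith [pi_le_four])

lemma ii_half : IntervalIntegrable f volume 0 (π/2) := by
  have hg : IntervalIntegrable (fun x => Real.log 2 + (Real.log (π/2) - Real.log x)) volume 0 (π/2) :=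
    intervalIntegrable_const.add (intervalIntegrable_const.sub ii_log)
  rw [intervalIntegrable_iff_integrableOn_Ioo_of_le (by positivity)] at hg ⊢
  refine MeasureTheory.Integrable.mono hg meas_f.aestronglyMeasurable ?_
  rw [ae_restrict_iff' measurableSet_Ioo]
  apply ae_of_all
  rintro x ⟨hx0, hx1⟩
  have hs : 0 < Real.sin x := sin_pos_of_pos_of_lt_pi hx0 (by linarith [pi_pos])
  have hs1 : Real.sin x ≤ 1 := sin_le_one x
  have hfx : f x = Real.log 2 + Real.log (Real.sin x) := by
    rw [f, abs_of_pos (by positivity), Real.log_mul two_ne_zero (ne_of_gt hs)]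
  have hls : Real.log (Real.sin x) ≤ 0 := Real.log_nonpos hs.le hs1
  have hl2 : (0:ℝ) ≤ Real.log 2 := Real.log_nonneg (by norm_num)
  have hlb : Real.log (2/π) + Real.log x ≤ Real.log (Real.sin x) := by
    rw [← Real.log_mul (by positivity) (ne_of_gt hx0)]
    exact Real.log_le_log (by positivity) (Real.mul_le_sin hx0.le hx1.le)
  have h2pi : Real.log (2/π) = -Real.log (π/2) := by
    rw [show (2:ℝ)/π = (π/2)⁻¹ by field_simp, Real.log_inv]
  rw [h2pi] at hlb
  have habs : |f x| ≤ Real.log 2 + (Real.log (π/2) - Real.log x) := by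
    rw [hfx]; rw [abs_le]; constructor <;> linarith
  calc ‖f x‖ = |f x| := rfl
    _ ≤ Real.log 2 + (Real.log (π/2) - Real.log x) := habs
    _ ≤ ‖Real.log 2 + (Real.log (π/2) - Real.log x)‖ := le_abs_self _

lemma ii_0pi : IntervalIntegrable f volume 0 π := by
  have h2 : IntervalIntegrable f volume (π/2) π := by
    have := ii_half.comp_sub_left π
    have he : (fun x => f (π - x)) = f := by
      funext x; simp [f, Real.sin_pi_sub]
    rw [he] at this
    have h1 : π - π/2 = π/2 := by ring
    have h0 : π - (0:ℝ) = π := by ring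
    rw [h1, h0] at this
    exact this.symm
  exact ii_half.trans h2

lemma ii_f {a b : ℝ} (ha : a ∈ Icc 0 π) (hb : b ∈ Icc 0 π) : IntervalIntegrable f volume a b := by
  apply ii_0pi.mono_set
  rw [uIcc_of_le pi_pos.le]
  exact uIcc_subset_Icc ha hb



noncomputable def S (x : ℝ) : ℝ := ∫ t in (0:ℝ)..x, f t

lemma refl_int (c : ℝ) : ∫ t in (π - c)..π, f t = S c := by
  have h2 : ∀ x, f (π - x) = f x := fun x => by simp [f, Real.sin_pi_sub]
  calc ∫ t in (π-c)..π, f t = ∫ t in (π-c)..(π-0), f t := by norm_num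
    _ = ∫ x in (0:ℝ)..c, f (π - x) := (integral_comp_sub_left f π).symm
    _ = S c := by simp only [h2]; rfl

lemma bad_null : volume ({x : ℝ | Real.sin x = 0} ∪ {x | Real.cos x = 0}) = 0 := by
  apply measure_union_null
  · have : {x : ℝ | Real.sin x = 0} = Set.range (fun n : ℤ => (n:ℝ) * π) := by
      ext x; simp [Real.sin_eq_zero_iff, Set.mem_range]
    rw [this]
    exact (Set.countable_range _).measure_zero _
  · have : {x : ℝ | Real.cos x = 0} = Set.range (fun n : ℤ => (2*(n:ℝ)+1) * π / 2) := by
      ext x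
      simp only [Set.mem_setOf_eq, Real.cos_eq_zero_iff, Set.mem_range]
      constructor
      · rintro ⟨k, hk⟩; exact ⟨k, hk.symm⟩
      · rintro ⟨k, hk⟩; exact ⟨k, hk.symm⟩
    rw [this]
    exact (Set.countable_range _).measure_zero _

lemma doubling {c : ℝ} (hc : c ∈ Icc 0 (π/2)) :
    S (2*c) = 2*(S c + ∫ t in (π/2)..(π/2 + c), f t) := by
  have hπ := pi_pos
  have hmem1 : c ∈ Icc 0 π := ⟨hc.1, by linarith [hc.2]⟩
  have hmem2 : (2*c) ∈ Icc 0 π := ⟨by linarith [hc.1], by linarith [hc.2]⟩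
  have h0 : (0:ℝ) ∈ Icc 0 π := ⟨le_rfl, hπ.le⟩
  have hhalf : (π/2) ∈ Icc 0 π := ⟨by positivity, by linarith⟩
  have hhc : (π/2 + c) ∈ Icc 0 π := ⟨by linarith [hc.1], by linarith [hc.2]⟩
  have h1 : ∫ x in (0:ℝ)..c, f (2*x) = (2:ℝ)⁻¹ • ∫ x in (0:ℝ)..(2*c), f x := by
    simpa using integral_comp_mul_left f (a := 0) (b := c) (two_ne_zero)
  have h2 : ∫ x in (0:ℝ)..c, f (2*x) = ∫ x in (0:ℝ)..c, (f x + f (x + π/2)) := by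
    apply intervalIntegral.integral_congr_ae
    have hae : ∀ᵐ x : ℝ, x ∉ ({x : ℝ | Real.sin x = 0} ∪ {x | Real.cos x = 0}) :=
      MeasureTheory.compl_mem_ae_iff.mpr bad_null
    filter_upwards [hae] with x hx _
    simp only [Set.mem_union, Set.mem_setOf_eq, not_or] at hx
    obtain ⟨hsx, hcx⟩ := hx
    have : f (2*x) = Real.log (|2 * Real.sin x| * |2 * Real.cos x|) := by
      rw [f]
      congr 1
      rw [← abs_mul]
      congr 1
      rw [Real.sin_two_mul]; ring
    rw [this, Real.log_mul (by simpa using hsx) (by simpa using hcx)]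
    congr 1
    rw [f, Real.sin_add_pi_div_two]
  have h3 : ∫ x in (0:ℝ)..c, (f x + f (x + π/2)) =
      (∫ x in (0:ℝ)..c, f x) + ∫ x in (0:ℝ)..c, f (x + π/2) := by
    apply integral_add (ii_f h0 hmem1)
    have := (ii_f hhalf hhc).comp_add_right (π/2)
    simpa using this
  have h4 : ∫ x in (0:ℝ)..c, f (x + π/2) = ∫ t in (π/2)..(π/2 + c), f t := by
    have := integral_comp_add_right (a := 0) (b := c) f (π/2)
    rw [this]
    norm_num [add_comm]
  have := h1.symm.trans (h2.trans (by rw [h3, h4]))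
  rw [S, S]
  rw [smul_eq_mul] at this
  linarith [this]

lemma S_split {x : ℝ} (hx : x ∈ Icc 0 π) : S x + (∫ t in x..π, f t) = S π := by
  rw [S, S]
  exact integral_add_adjacent_intervals (ii_f ⟨le_rfl, pi_pos.le⟩ hx) (ii_f hx ⟨pi_pos.le, le_rfl⟩)

lemma S_pi_div_two : S (π/2) = 0 := by
  have hπ := pi_pos
  have hd := doubling (c := π/2) ⟨by positivity, le_rfl⟩
  rw [show 2*(π/2) = π by ring, show π/2 + π/2 = π by ring] at hd
  have h3 : ∫ t in (π/2)..π, f t = S (π/2) := by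
    have := refl_int (π/2)
    rw [show π - π/2 = π/2 by ring] at this
    exact this
  have hsp := S_split (x := π/2) ⟨by positivity, by linarith⟩
  rw [h3] at hd hsp
  linarith

lemma S_pi : S π = 0 := by
  have hπ := pi_pos
  have h3 : ∫ t in (π/2)..π, f t = S (π/2) := by
    have := refl_int (π/2); rw [show π - π/2 = π/2 by ring] at this; exact this
  have hsp := S_split (x := π/2) ⟨by positivity, by linarith⟩
  rw [h3, S_pi_div_two] at hsp
  linarith

lemma S_two_pi_div_three : S (2*π/3) = -S (π/3) := by
  have hπ := pi_pos
  have h := S_split (x := 2*π/3) ⟨by positivity, by linarith⟩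
  have h2 : ∫ t in (2*π/3)..π, f t = S (π/3) := by
    have := refl_int (π/3); rw [show π - π/3 = 2*π/3 by ring] at this; exact this
  rw [h2, S_pi] at h
  linarith

lemma S_five_pi_div_six : S (5*π/6) = -S (π/6) := by
  have hπ := pi_pos
  have h := S_split (x := 5*π/6) ⟨by positivity, by linarith⟩
  have h2 : ∫ t in (5*π/6)..π, f t = S (π/6) := by
    have := refl_int (π/6); rw [show π - π/6 = 5*π/6 by ring] at this; exact this
  rw [h2, S_pi] at h
  linarith

lemma S_key : 2 * S (π/6) = 3 * S (π/3) := by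
  have hπ := pi_pos
  have hd := doubling (c := π/6) ⟨by positivity, by linarith⟩
  rw [show 2*(π/6) = π/3 by ring, show π/2 + π/6 = 2*π/3 by ring] at hd
  have h2 : ∫ t in (π/2)..(2*π/3), f t = S (2*π/3) - S (π/2) := by
    have := integral_add_adjacent_intervals (a := 0) (b := π/2) (c := 2*π/3) (μ := volume) (f := f)
      (ii_f ⟨le_rfl, hπ.le⟩ ⟨by positivity, by linarith⟩)
      (ii_f ⟨by positivity, by linarith⟩ ⟨by positivity, by linarith⟩)
    rw [show ∫ t in (0:ℝ)..(π/2), f t = S (π/2) from rfl,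
        show ∫ t in (0:ℝ)..(2*π/3), f t = S (2*π/3) from rfl] at this
    linarith
  rw [h2, S_pi_div_two, S_two_pi_div_three] at hd
  linarith



lemma Lob_eq (s : ℝ) : Lob s = -S s := rfl

lemma arccos_le_arccos' {x y : ℝ} (hx : -1 ≤ x) (hy : y ≤ 1) (hxy : x ≤ y) :
    Real.arccos y ≤ Real.arccos x := by
  rcases eq_or_lt_of_le hxy with h | h
  · rw [h]
  · exact (Real.strictAntiOn_arccos ⟨hx, by linarith⟩ ⟨by linarith, hy⟩ h).le

lemma hasDerivAt_S {s : ℝ} (hs : s ∈ Ioo 0 π) : HasDerivAt S (f s) s := by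
  have hint : IntervalIntegrable f volume 0 s :=
    ii_f ⟨le_rfl, pi_pos.le⟩ ⟨hs.1.le, hs.2.le⟩
  have hmeas : StronglyMeasurableAtFilter f (nhds s) :=
    ⟨Set.univ, Filter.univ_mem, meas_f.aestronglyMeasurable⟩
  have hsin : Real.sin s > 0 := sin_pos_of_pos_of_lt_pi hs.1 hs.2
  have hcont : ContinuousAt f s := by
    have hne : |2 * Real.sin s| ≠ 0 := by positivity
    have hin : ContinuousAt (fun t : ℝ => |2 * Real.sin t|) s :=
      ((continuous_const.mul Real.continuous_sin).abs).continuousAt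
    exact ContinuousAt.comp (Real.continuousAt_log hne) hin
  exact intervalIntegral.integral_hasDerivAt_right hint hmeas hcont

lemma hasDerivAt_Lob {s : ℝ} (hs : s ∈ Ioo 0 π) : HasDerivAt Lob (-(f s)) s :=
  (hasDerivAt_S hs).neg

-- basic bounds for α ∈ Icc 0 (2π/3)
lemma bounds {α : ℝ} (h0 : 0 ≤ α) (h1 : α ≤ 2*π/3) :
    -1 ≤ Real.cos α - 1/2 ∧ Real.cos α - 1/2 ≤ 1 ∧
    α ≤ Real.arccos (Real.cos α - 1/2) := by
  have hπ := pi_pos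
  have hcos23 : Real.cos (2*π/3) = -(1/2) := by
    rw [show 2*π/3 = π - π/3 by ring, Real.cos_pi_sub, Real.cos_pi_div_three]
  have hlb : Real.cos (2*π/3) ≤ Real.cos α :=
    Real.cos_le_cos_of_nonneg_of_le_pi h0 (by linarith) h1
  rw [hcos23] at hlb
  have hub : Real.cos α ≤ 1 := Real.cos_le_one α
  refine ⟨by linarith, by linarith, ?_⟩
  have : Real.arccos (Real.cos α) ≤ Real.arccos (Real.cos α - 1/2) := by
    apply arccos_le_arccos' (by linarith) (Real.cos_le_one α) (by linarith)
  rwa [Real.arccos_cos h0 (by linarith)] at this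

lemma mapsTo1 {α : ℝ} (h0 : 0 ≤ α) (h1 : α ≤ 2*π/3) :
    (1/2) * Real.arccos (Real.cos α - 1/2) + α/2 ∈ Icc 0 π := by
  have hπ := pi_pos
  have hb := bounds h0 h1
  have h2 := Real.arccos_le_pi (Real.cos α - 1/2)
  have h3 := Real.arccos_nonneg (Real.cos α - 1/2)
  constructor <;> [positivity; nlinarith]

lemma mapsTo2 {α : ℝ} (h0 : 0 ≤ α) (h1 : α ≤ 2*π/3) :
    (1/2) * Real.arccos (Real.cos α - 1/2) - α/2 ∈ Icc 0 π := by
  have hπ := pi_pos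
  have hb := bounds h0 h1
  have h2 := Real.arccos_le_pi (Real.cos α - 1/2)
  constructor <;> nlinarith [hb.2.2]

lemma contLob : ContinuousOn Lob (Icc 0 π) := by
  have h := intervalIntegral.continuousOn_primitive_interval'
    (μ := volume) (f := f) (b₁ := 0) (b₂ := π)
    (ii_f ⟨le_rfl, pi_pos.le⟩ ⟨pi_pos.le, le_rfl⟩) (left_mem_uIcc)
  rw [uIcc_of_le pi_pos.le] at h
  exact h.neg

noncomputable def F (α : ℝ) : ℝ :=
  2 * (Lob ((1/2) * Real.arccos (Real.cos α - 1/2) + α/2)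
     + Lob ((1/2) * Real.arccos (Real.cos α - 1/2) - α/2))

lemma contF : ContinuousOn F (Icc 0 (2*π/3)) := by
  have hc1 : Continuous fun α : ℝ => (1/2) * Real.arccos (Real.cos α - 1/2) + α/2 := by
    continuity
  have hc2 : Continuous fun α : ℝ => (1/2) * Real.arccos (Real.cos α - 1/2) - α/2 := by
    continuity
  apply ContinuousOn.mul continuousOn_const
  apply ContinuousOn.add
  · exact contLob.comp hc1.continuousOn (fun x hx => mapsTo1 hx.1 hx.2)
  · exact contLob.comp hc2.continuousOn (fun x hx => mapsTo2 hx.1 hx.2)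

lemma F_end : F (2*π/3) = 0 := by
  have hπ := pi_pos
  have h1 : Real.cos (2*π/3) - 1/2 = -1 := by
    rw [show 2*π/3 = π - π/3 by ring, Real.cos_pi_sub, Real.cos_pi_div_three]; ring
  rw [F, h1, Real.arccos_neg_one]
  rw [show (1/2)*π + (2*π/3)/2 = 5*π/6 by ring, show (1/2)*π - (2*π/3)/2 = π/6 by ring]
  rw [Lob_eq, Lob_eq, S_five_pi_div_six]
  ring

lemma derivF_neg {α : ℝ} (hmem : α ∈ Ioo 0 (2*π/3)) : deriv F α < 0 := by
  obtain ⟨h0, h1⟩ := hmem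
  have hπ := pi_pos
  set g : ℝ := Real.cos α - 1/2 with hg
  -- strict bounds
  have hcosa1 : Real.cos α < 1 := by
    have := Real.strictAntiOn_cos (a := 0) (b := α) ⟨le_rfl, hπ.le⟩ ⟨h0.le, by linarith⟩ h0
    simpa using this
  have hcosa2 : -(1/2) < Real.cos α := by
    have := Real.strictAntiOn_cos (a := α) (b := 2*π/3) ⟨h0.le, by linarith⟩
      ⟨by positivity, by linarith⟩ h1
    have hc23 : Real.cos (2*π/3) = -(1/2) := by
      rw [show 2*π/3 = π - π/3 by ring, Real.cos_pi_sub, Real.cos_pi_div_three]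
    rw [hc23] at this
    linarith
  have hgm1 : -1 < g := by rw [hg]; linarith
  have hg1 : g < 1 := by rw [hg]; linarith
  have harc_lt_pi : Real.arccos g < π := by
    have := Real.strictAntiOn_arccos ⟨le_rfl, by norm_num⟩ ⟨hgm1.le, hg1.le⟩ hgm1
    rwa [Real.arccos_neg_one] at this
  have halt : α < Real.arccos g := by
    have := Real.strictAntiOn_arccos ⟨hgm1.le, hg1.le⟩ ⟨by linarith, Real.cos_le_one α⟩
      (by rw [hg]; linarith)
    rwa [Real.arccos_cos h0.le (by linarith)] at this
  set θ : ℝ := (1/2) * Real.arccos g with hθ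
  have hθ2 : 2*θ = Real.arccos g := by rw [hθ]; ring
  have hθub : θ < π/2 := by rw [hθ]; linarith
  have hθlb : α/2 < θ := by rw [hθ]; linarith
  have hθpos : 0 < θ := by rw [hθ]; nlinarith [Real.arccos_nonneg g, halt]
  set aa : ℝ := θ + α/2 with haa_def
  set bb : ℝ := θ - α/2 with hbb_def
  have haa_lt : aa < π := by rw [haa_def]; linarith
  have hbb_pos : 0 < bb := by rw [hbb_def]; linarith
  have hbb_lt_aa : bb < aa := by rw [haa_def, hbb_def]; linarith
  have hsa : 0 < Real.sin aa := sin_pos_of_pos_of_lt_pi (by linarith) haa_lt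
  have hsb : 0 < Real.sin bb := sin_pos_of_pos_of_lt_pi hbb_pos (by linarith)
  -- product identity
  have hcos2θ : Real.cos (2*θ) = g := by
    rw [hθ2]; exact Real.cos_arccos hgm1.le hg1.le
  have hprod : (2*Real.sin aa) * (2*Real.sin bb) = 1 := by
    have hcc := Real.cos_sub_cos α (2*θ)
    rw [show (α + 2*θ)/2 = aa by rw [haa_def]; ring,
        show (α - 2*θ)/2 = -bb by rw [hbb_def]; ring, Real.sin_neg] at hcc
    rw [hcos2θ] at hcc
    have heq : Real.cos α - g = 1/2 := by rw [hg]; ring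
    rw [heq] at hcc
    linear_combination -2 * hcc
  -- sin aa > sin bb
  have hdiff : Real.sin bb < Real.sin aa := by
    have hss := Real.sin_sub_sin aa bb
    rw [show (aa - bb)/2 = α/2 by rw [haa_def, hbb_def]; ring,
        show (aa + bb)/2 = θ by rw [haa_def, hbb_def]; ring] at hss
    have h1' : 0 < Real.sin (α/2) := sin_pos_of_pos_of_lt_pi (by linarith) (by linarith)
    have h2' : 0 < Real.cos θ := Real.cos_pos_of_mem_Ioo ⟨by linarith, hθub⟩
    nlinarith [hss]
  have h1lt : 1 < 2 * Real.sin aa := by nlinarith [hprod, hsb, hdiff]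
  -- f values
  have hfa : f aa = Real.log (2 * Real.sin aa) := by
    rw [f, abs_of_pos (by positivity)]
  have hfb : f bb = Real.log (2 * Real.sin bb) := by
    rw [f, abs_of_pos (by positivity)]
  have hsum0 : f aa + f bb = 0 := by
    rw [hfa, hfb, ← Real.log_mul (by positivity) (by positivity), hprod, Real.log_one]
  have hfa_pos : 0 < f aa := by rw [hfa]; exact Real.log_pos h1lt
  -- derivative assembly
  have hinner : HasDerivAt (fun x : ℝ => Real.cos x - 1/2) (-Real.sin α) α :=
    (Real.hasDerivAt_cos α).sub_const _
  have harc : HasDerivAt (fun x : ℝ => Real.arccos (Real.cos x - 1/2))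
      ((-(1 / Real.sqrt (1 - g^2))) * (-Real.sin α)) α := by
    have := (Real.hasDerivAt_arccos (ne_of_gt hgm1) (ne_of_lt hg1)).comp α hinner
    exact this
  set D : ℝ := (1/2) * ((-(1 / Real.sqrt (1 - g^2))) * (-Real.sin α)) with hD
  have hθd : HasDerivAt (fun x : ℝ => (1/2) * Real.arccos (Real.cos x - 1/2)) D α :=
    harc.const_mul (1/2)
  have hu : HasDerivAt (fun x : ℝ => (1/2) * Real.arccos (Real.cos x - 1/2) + x/2)
      (D + 1/2) α := by
    have := hθd.add ((hasDerivAt_id α).div_const 2)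
    exact this
  have hv : HasDerivAt (fun x : ℝ => (1/2) * Real.arccos (Real.cos x - 1/2) - x/2)
      (D - 1/2) α := by
    have := hθd.sub ((hasDerivAt_id α).div_const 2)
    exact this
  have haa_val : (1/2) * Real.arccos (Real.cos α - 1/2) + α/2 = aa := by
    rw [haa_def, hθ, hg]
  have hbb_val : (1/2) * Real.arccos (Real.cos α - 1/2) - α/2 = bb := by
    rw [hbb_def, hθ, hg]
  have hLa : HasDerivAt Lob (-(f aa)) aa := hasDerivAt_Lob ⟨by linarith, haa_lt⟩
  have hLb : HasDerivAt Lob (-(f bb)) bb := hasDerivAt_Lob ⟨hbb_pos, by linarith⟩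
  have hA : HasDerivAt (fun x : ℝ => Lob ((1/2) * Real.arccos (Real.cos x - 1/2) + x/2))
      ((-(f aa)) * (D + 1/2)) α := by
    have := hLa.comp α hu
    exact this
  have hB : HasDerivAt (fun x : ℝ => Lob ((1/2) * Real.arccos (Real.cos x - 1/2) - x/2))
      ((-(f bb)) * (D - 1/2)) α := by
    have := hLb.comp α hv
    exact this
  have hF : HasDerivAt F (2 * ((-(f aa)) * (D + 1/2) + (-(f bb)) * (D - 1/2))) α := by
    exact ((hA.add hB).const_mul 2)
  rw [hF.deriv]
  have : f bb = -(f aa) := by linarith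
  rw [this]
  have : 2 * ((-(f aa)) * (D + 1/2) + (-(-(f aa))) * (D - 1/2)) = -(2 * f aa) := by ring
  rw [this]
  linarith

end LobAux


theorem volume_fig8_cone_positive (α : ℝ) (hα0 : 0 ≤ α) (hα : α < 2 * π / 3) :
    0 < 2 * (Lob ((1 / 2) * Real.arccos (Real.cos α - 1 / 2) + α / 2)
        + Lob ((1 / 2) * Real.arccos (Real.cos α - 1 / 2) - α / 2)) ∧
      (α = 0 →
        2 * (Lob ((1 / 2) * Real.arccos (Real.cos α - 1 / 2) + α / 2)
            + Lob ((1 / 2) * Real.arccos (Real.cos α - 1 / 2) - α / 2))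
          = 6 * Lob (π / 3)) := by
  have hπ := Real.pi_pos
  have hmain : 0 < LobAux.F α := by
    have hstrict : StrictAntiOn LobAux.F (Icc 0 (2*π/3)) := by
      apply strictAntiOn_of_deriv_neg (convex_Icc _ _) LobAux.contF
      intro x hx
      rw [interior_Icc] at hx
      exact LobAux.derivF_neg hx
    have h := hstrict (Set.mem_Icc.mpr ⟨hα0, by linarith⟩)
      (Set.mem_Icc.mpr ⟨by positivity, le_rfl⟩) hα
    rw [LobAux.F_end] at h
    exact h
  constructor
  · exact hmain
  · intro h0
    subst h0
    rw [Real.cos_zero]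
    have h12 : (1:ℝ) - 1/2 = Real.cos (π/3) := by rw [Real.cos_pi_div_three]; norm_num
    rw [h12, Real.arccos_cos (by positivity) (by linarith)]
    rw [show (1/2)*(π/3) + 0/2 = π/6 by ring, show (1/2)*(π/3) - 0/2 = π/6 by ring]
    rw [LobAux.Lob_eq, LobAux.Lob_eq]
    linarith [LobAux.S_key]
end
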